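/- Two uniform block permutations d₁, d₂ ∈ U_k generate the same left ideal (U_k d₁ = U_k d₂) if and only if bot(d₁) = bot(d₂). Consequently, the L-classes of U_k are in bijection with set partitions of [k], and each L-class contains exactly one idempotent. -/

import Mathlib

open Sum

/-- A set partition `d` of `[k] ∪ [k̄]` (encoded as a setoid on `Fin k ⊕ Fin k`,
top row = `inl`, bottom row = `inr`) is *uniform* if every block contains as many
top-row elements as bottom-row elements. -/
def IsUniform (k : ℕ) (d : Setoid (Fin k ⊕ Fin k)) : Prop :=
  ∀ x : Fin k ⊕ Fin k,
    {a : Fin k | d.r (.inl a) x}.ncard = {b : Fin k | d.r (.inr b) x}.ncard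

/-- Embedding of a two-row diagram into the top two rows of a three-row diagram. -/
def row12 (k : ℕ) : Fin k ⊕ Fin k → Fin k ⊕ (Fin k ⊕ Fin k) :=
  Sum.elim (fun a => .inl a) (fun b => .inr (.inl b))

/-- Embedding of a two-row diagram into the bottom two rows of a three-row diagram. -/
def row23 (k : ℕ) : Fin k ⊕ Fin k → Fin k ⊕ (Fin k ⊕ Fin k) :=
  Sum.elim (fun a => .inr (.inl a)) (fun b => .inr (.inr b))

/-- Embedding of a two-row diagram into the outer two rows of a three-row diagram. -/
def row13 (k : ℕ) : Fin k ⊕ Fin k → Fin k ⊕ (Fin k ⊕ Fin k) :=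
  Sum.elim (fun a => .inl a) (fun b => .inr (.inr b))

/-- The equivalence relation on the three-row vertex set generated by transporting
`d` along the embedding `f`. -/
def liftSetoid (k : ℕ) (f : Fin k ⊕ Fin k → Fin k ⊕ (Fin k ⊕ Fin k))
    (d : Setoid (Fin k ⊕ Fin k)) : Setoid (Fin k ⊕ (Fin k ⊕ Fin k)) :=
  Relation.EqvGen.setoid (fun x y => ∃ a b, d.r a b ∧ x = f a ∧ y = f b)

/-- The diagram product: stack `d` on top of `d'`, take connected components of the
three-row diagram, and restrict to the outer rows. -/
def ubpMul {k : ℕ} (d d' : Setoid (Fin k ⊕ Fin k)) : Setoid (Fin k ⊕ Fin k) :=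
  Setoid.comap (row13 k) (liftSetoid k (row12 k) d ⊔ liftSetoid k (row23 k) d')

/-- The identity diagram `{{1,1̄},…,{k,k̄}}`. -/
def ubpOne (k : ℕ) : Setoid (Fin k ⊕ Fin k) := Setoid.ker (Sum.elim id id)

/-- The set partition of `[k]` induced on the top row. -/
def topPart {k : ℕ} (d : Setoid (Fin k ⊕ Fin k)) : Setoid (Fin k) :=
  Setoid.comap Sum.inl d

/-- The set partition of `[k]` induced on the bottom row. -/
def botPart {k : ℕ} (d : Setoid (Fin k ⊕ Fin k)) : Setoid (Fin k) :=
  Setoid.comap Sum.inr d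

/-- The idempotent diagram `e_π = {A ∪ Ā : A ∈ π}` associated to a set partition `π` of `[k]`. -/
def ePart {k : ℕ} (π : Setoid (Fin k)) : Setoid (Fin k ⊕ Fin k) :=
  Setoid.comap (Sum.elim id id) π

/-- The diagram `{{i, σ(i)‾} : i ∈ [k]}` of a permutation `σ ∈ S_k`. -/
def permToUBP {k : ℕ} (σ : Equiv.Perm (Fin k)) : Setoid (Fin k ⊕ Fin k) :=
  Setoid.ker (Sum.elim (fun i => σ i) id)

/-- The reflection `d̃` of a diagram across a horizontal line (swap barred/unbarred). -/
def reflectUBP {k : ℕ} (d : Setoid (Fin k ⊕ Fin k)) : Setoid (Fin k ⊕ Fin k) :=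
  Setoid.comap Sum.swap d

/-- The image of a set `C ⊆ [k]` of top-row elements under the block bijection of `d`:
the set of bottom-row elements connected to some element of `C`. -/
def blockMap {k : ℕ} (d : Setoid (Fin k ⊕ Fin k)) (C : Set (Fin k)) : Set (Fin k) :=
  {j | ∃ i ∈ C, d.r (.inl i) (.inr j)}

/-- The principal left ideal `U_k d` generated by `d`. -/
def leftIdeal (k : ℕ) (d : Setoid (Fin k ⊕ Fin k)) : Set (Setoid (Fin k ⊕ Fin k)) :=
  {x | ∃ a, IsUniform k a ∧ x = ubpMul a d}

/-!
For uniform `d`, the left ideal `U_k d` is exactly the set of uniform `x` with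
`bot(d) ≤ bot(x)`. A product `a d` only coarsens the bottom partition of `d`, and it stays
uniform because each block of the stacked diagram is a union of blocks of `a` (rows 1, 2) and
of blocks of `d` (rows 2, 3), each balanced. Conversely such an `x` equals `x' d`, where `x'` is
`x` with its bottom row relabelled by a map `m` sending `j` to a bottom point of the block of
`j` in `d`. Since `bot(e_π) = π`, every set partition arises.
An idempotent `e` must join every `i` to `ī`: in the middle row of `e e`, the map sending
a point to a bottom point of its block is idempotent and surjective up to connectivity,
so it is the identity there. Therefore `e = e_{bot(e)}`.
-/

open Finset in
theorem ncard_preimage_inl_eq_ncard_preimage_inr {α β : Type*} [Finite α] [Finite β]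
    {s : Setoid (α ⊕ β)} (hs : ∀ x, {a | s (inl a) x}.ncard = {b | s (inr b) x}.ncard)
    {S : Set (α ⊕ β)} (hS : ∀ x y, s x y → x ∈ S → y ∈ S) :
    (inl ⁻¹' S).ncard = (inr ⁻¹' S).ncard := by
  classical
  have := Fintype.ofFinite α
  have := Fintype.ofFinite β
  have hfiber (x : α ⊕ β) :
      #{a | inl a ∈ S ∧ s (inl a) x} = #{b | inr b ∈ S ∧ s (inr b) x} := by
    have := hs x
    simp only [Set.ncard_eq_toFinset_card', Set.toFinset_ofPred] at this
    by_cases hx : x ∈ S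
    · convert this using 3 <;>
        exact and_iff_right_of_imp fun h => hS _ _ (s.symm h) hx
    · convert (rfl : 0 = 0) <;> simp only [card_eq_zero, filter_eq_empty_iff] <;>
        exact fun _ _ h => hx (hS _ _ h.2 h.1)
  change {a | inl a ∈ S}.ncard = {b | inr b ∈ S}.ncard
  simp only [Set.ncard_eq_toFinset_card', Set.toFinset_ofPred]
  rw [card_eq_sum_card_fiberwise (f := fun a => (⟦inl a⟧ : Quotient s)) (t := univ)
      fun _ _ => mem_univ _,
    card_eq_sum_card_fiberwise (f := fun b => (⟦inr b⟧ : Quotient s)) (t := univ)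
      fun _ _ => mem_univ _]
  refine sum_congr rfl fun q _ => q.inductionOn fun x => ?_
  simpa only [filter_filter, Quotient.eq] using hfiber x

section UniformBlockPermutations

variable {k : ℕ}

theorem IsUniform.exists_rel_inr {d : Setoid (Fin k ⊕ Fin k)} (hd : IsUniform k d)
    (u : Fin k ⊕ Fin k) : ∃ b, d.r u (inr b) := by
  cases u with
  | inl a =>
    have hpos : 0 < {b | d.r (inr b) (inl a)}.ncard :=
      hd (inl a) ▸ (Set.ncard_pos (Set.toFinite _)).mpr ⟨a, d.refl' _⟩
    obtain ⟨b, hb⟩ := (Set.ncard_pos (Set.toFinite _)).mp hpos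
    exact ⟨b, d.symm' hb⟩
  | inr b => exact ⟨b, d.refl' _⟩

theorem IsUniform.exists_rel_inl {d : Setoid (Fin k ⊕ Fin k)} (hd : IsUniform k d)
    (u : Fin k ⊕ Fin k) : ∃ a, d.r u (inl a) := by
  cases u with
  | inl a => exact ⟨a, d.refl' _⟩
  | inr b =>
    have hpos : 0 < {a | d.r (inl a) (inr b)}.ncard :=
      (hd (inr b)).symm ▸ (Set.ncard_pos (Set.toFinite _)).mpr ⟨b, d.refl' _⟩
    obtain ⟨a, ha⟩ := (Set.ncard_pos (Set.toFinite _)).mp hpos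
    exact ⟨a, d.symm' ha⟩

theorem liftSetoid_le_iff {f : Fin k ⊕ Fin k → Fin k ⊕ (Fin k ⊕ Fin k)}
    {d : Setoid (Fin k ⊕ Fin k)} {S : Setoid (Fin k ⊕ (Fin k ⊕ Fin k))} :
    liftSetoid k f d ≤ S ↔ d ≤ S.comap f :=
  ⟨fun h _ _ huv => h (Relation.EqvGen.rel _ _ ⟨_, _, huv, rfl, rfl⟩),
    fun h => Setoid.eqvGen_le fun _ _ ⟨_, _, huv, hx, hy⟩ => hx ▸ hy ▸ h huv⟩

def stack (a d : Setoid (Fin k ⊕ Fin k)) : Setoid (Fin k ⊕ (Fin k ⊕ Fin k)) :=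
  liftSetoid k (row12 k) a ⊔ liftSetoid k (row23 k) d

section Stack

variable {a d : Setoid (Fin k ⊕ Fin k)}

theorem stack_le_iff {S : Setoid (Fin k ⊕ (Fin k ⊕ Fin k))} :
    stack a d ≤ S ↔ a ≤ S.comap (row12 k) ∧ d ≤ S.comap (row23 k) := by
  rw [stack, sup_le_iff, liftSetoid_le_iff, liftSetoid_le_iff]

theorem stack_rel_row12 {u v : Fin k ⊕ Fin k} (h : a.r u v) :
    stack a d (row12 k u) (row12 k v) :=
  (stack_le_iff.mp le_rfl).1 h

theorem stack_rel_row23 {u v : Fin k ⊕ Fin k} (h : d.r u v) :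
    stack a d (row23 k u) (row23 k v) :=
  (stack_le_iff.mp le_rfl).2 h

theorem botPart_le_botPart_ubpMul : botPart d ≤ botPart (ubpMul a d) :=
  fun _ _ h => stack_rel_row23 (a := a) h

theorem isUniform_ubpMul (ha : IsUniform k a) (hd : IsUniform k d) :
    IsUniform k (ubpMul a d) := by
  intro x
  set T := {w | stack a d w (row13 k x)}
  have hsat {s : Setoid (Fin k ⊕ Fin k)} {f : Fin k ⊕ Fin k → Fin k ⊕ (Fin k ⊕ Fin k)}
      (hf : ∀ u v, s.r u v → stack a d (f u) (f v)) (u v : Fin k ⊕ Fin k) (huv : s.r u v)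
      (hu : u ∈ f ⁻¹' T) : v ∈ f ⁻¹' T :=
    (stack a d).trans' ((stack a d).symm' (hf u v huv)) hu
  exact (ncard_preimage_inl_eq_ncard_preimage_inr ha (hsat fun _ _ => stack_rel_row12)).trans
    (ncard_preimage_inl_eq_ncard_preimage_inr hd (hsat fun _ _ => stack_rel_row23))

end Stack

section Factorization

variable {x d : Setoid (Fin k ⊕ Fin k)} {m : Fin k → Fin k}

theorem rel_inr_sumElim_id (hm : ∀ j, d.r (inl j) (inr (m j))) (u : Fin k ⊕ Fin k) :
    d.r u (inr (Sum.elim m id u)) := by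
  cases u with
  | inl j => exact hm j
  | inr n => exact d.refl' _

theorem IsUniform.comap_sumMap (hx : IsUniform k x) (hd : IsUniform k d)
    (hbot : botPart d ≤ botPart x) (hm : ∀ j, d.r (inl j) (inr (m j))) :
    IsUniform k (x.comap (Sum.map id m)) := fun z =>
  (hx _).trans <| Eq.symm <| ncard_preimage_inl_eq_ncard_preimage_inr hd
    (S := {u | x.r (inr (Sum.elim m id u)) (Sum.map id m z)}) fun u v huv hu =>
      x.trans' (x.symm' (hbot (d.trans' (d.symm' (rel_inr_sumElim_id hm u))
        (d.trans' huv (rel_inr_sumElim_id hm v))))) hu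

theorem ubpMul_comap_sumMap (hx : IsUniform k x) (hd : IsUniform k d)
    (hbot : botPart d ≤ botPart x) (hm : ∀ j, d.r (inl j) (inr (m j))) :
    ubpMul (x.comap (Sum.map id m)) d = x := by
  set a := x.comap (Sum.map id m)
  set B := stack a d
  apply le_antisymm
  · -- merging each middle point `n` with the bottom point `m n` respects both `a` and `d`
    let collapse : Fin k ⊕ (Fin k ⊕ Fin k) → Fin k ⊕ Fin k :=
      Sum.elim inl (Sum.elim (inr ∘ m) inr)
    have hB : B ≤ x.comap collapse := by
      refine stack_le_iff.mpr ⟨fun u v h => ?_, fun u v h => ?_⟩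
      · cases u <;> cases v <;> exact h
      · have := hbot (d.trans' (d.symm' (rel_inr_sumElim_id hm u))
          (d.trans' h (rel_inr_sumElim_id hm v)))
        cases u <;> cases v <;> exact this
    intro u v h
    have := hB h
    cases u <;> cases v <;> exact this
  · have hreach (w : Fin k ⊕ Fin k) : ∃ i, B (row13 k w) (inl i) ∧ x.r (inl i) w := by
      cases w with
      | inl i => exact ⟨i, B.refl' _, x.refl' _⟩
      | inr n =>
        obtain ⟨j, hj⟩ := hd.exists_rel_inl (inr n)
        obtain ⟨i, hi⟩ := hx.exists_rel_inl (inr (m j))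
        have hi' : a.r (inr j) (inl i) := hi
        exact ⟨i, B.trans' (stack_rel_row23 hj) (stack_rel_row12 hi'),
          x.symm' (x.trans' (hbot (d.trans' hj (hm j))) hi)⟩
    intro u v h
    obtain ⟨i, hBu, hxu⟩ := hreach u
    obtain ⟨i', hBv, hxv⟩ := hreach v
    have hii' : a.r (inl i) (inl i') := x.trans' hxu (x.trans' h (x.symm' hxv))
    exact B.trans' hBu (B.trans' (stack_rel_row12 hii') (B.symm' hBv))

end Factorization

theorem leftIdeal_eq {d : Setoid (Fin k ⊕ Fin k)} (hd : IsUniform k d) :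
    leftIdeal k d = {x | IsUniform k x ∧ botPart d ≤ botPart x} := by
  ext x
  constructor
  · rintro ⟨a, ha, rfl⟩
    exact ⟨isUniform_ubpMul ha hd, botPart_le_botPart_ubpMul⟩
  · rintro ⟨hx, hbot⟩
    choose m hm using fun j => hd.exists_rel_inr (inl j)
    exact ⟨_, hx.comap_sumMap hd hbot hm, (ubpMul_comap_sumMap hx hd hbot hm).symm⟩

theorem leftIdeal_eq_leftIdeal_iff {d₁ d₂ : Setoid (Fin k ⊕ Fin k)} (h₁ : IsUniform k d₁)
    (h₂ : IsUniform k d₂) :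
    leftIdeal k d₁ = leftIdeal k d₂ ↔ botPart d₁ = botPart d₂ := by
  rw [leftIdeal_eq h₁, leftIdeal_eq h₂]
  refine ⟨fun h => le_antisymm ?_ ?_, fun h => by rw [h]⟩
  · exact ((Set.ext_iff.mp h d₂).mpr ⟨h₂, le_rfl⟩).2
  · exact ((Set.ext_iff.mp h d₁).mp ⟨h₁, le_rfl⟩).2

theorem isUniform_ePart (π : Setoid (Fin k)) : IsUniform k (ePart π) := fun _ => rfl

theorem botPart_ePart (π : Setoid (Fin k)) : botPart (ePart π) = π := rfl

theorem ePart_botPart_eq_self_iff {d : Setoid (Fin k ⊕ Fin k)} :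
    ePart (botPart d) = d ↔ ∀ i, d.r (inl i) (inr i) := by
  refine ⟨fun h i => h ▸ d.refl' (inr i), fun h => Setoid.ext fun u v => ?_⟩
  have hu := rel_inr_sumElim_id (m := id) h u
  have hv := rel_inr_sumElim_id (m := id) h v
  exact ⟨fun huv => d.trans' hu (d.trans' huv (d.symm' hv)),
    fun huv => d.trans' (d.symm' hu) (d.trans' huv hv)⟩

theorem IsUniform.rel_inl_inr_of_ubpMul_self {e : Setoid (Fin k ⊕ Fin k)} (he : IsUniform k e)
    (hee : ubpMul e e = e) (i : Fin k) : e.r (inl i) (inr i) := by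
  set B := stack e e
  have hB {u v : Fin k ⊕ Fin k} (h : B (row13 k u) (row13 k v)) : e.r u v := by
    rw [← hee]; exact h
  let mid : Fin k → Fin k ⊕ (Fin k ⊕ Fin k) := fun n => inr (inl n)
  choose μ hμ using fun i => he.exists_rel_inr (inl i)
  choose ν hν using fun n => he.exists_rel_inl (inr n)
  have hbot {n n' : Fin k} (h : e.r (inr n) (inr n')) : B (mid n) (mid n') := stack_rel_row12 h
  have hμ_congr {n n' : Fin k} (h : B (mid n) (mid n')) : B (mid (μ n)) (mid (μ n')) :=
    hbot <| hB <|
      B.trans' (B.symm' (stack_rel_row23 (hμ n))) (B.trans' h (stack_rel_row23 (hμ n')))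
  have hμν (n : Fin k) : B (mid (μ (ν n))) (mid n) :=
    hbot (e.symm' (e.trans' (hν n) (hμ (ν n))))
  have hμμ (n : Fin k) : B (mid (μ (μ n))) (mid (μ n)) :=
    hbot <| e.symm' <| e.trans' (e.symm' (hμ n)) <|
      hB <| B.trans' (stack_rel_row12 (hμ n)) (stack_rel_row23 (hμ (μ n)))
  -- up to `B`, `μ` is idempotent with right inverse `ν`, hence the identity
  have hμ_fix : B (mid (μ i)) (mid i) :=
    B.trans' (hμ_congr (B.symm' (hμν i))) (B.trans' (hμμ (ν i)) (hμν i))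
  have htop : e.r (inl i) (inl (ν i)) :=
    hB <| B.trans' (stack_rel_row12 (hμ i)) (B.trans' hμ_fix (stack_rel_row12 (hν i)))
  exact e.trans' htop (e.symm' (hν i))

theorem IsUniform.ubpMul_self_eq_self_iff {e : Setoid (Fin k ⊕ Fin k)} (he : IsUniform k e) :
    ubpMul e e = e ↔ ePart (botPart e) = e := by
  rw [ePart_botPart_eq_self_iff]
  refine ⟨he.rel_inl_inr_of_ubpMul_self, fun h => ?_⟩
  simpa only [Sum.map_id_id, Setoid.comap_id] using ubpMul_comap_sumMap he he le_rfl (m := id) h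

end UniformBlockPermutations

/-- `U_k d₁ = U_k d₂ ↔ bot(d₁) = bot(d₂)`; consequently the
`L`-classes of `U_k` are in bijection with the set partitions of `[k]`, and each
`L`-class contains exactly one idempotent. -/
theorem ubp_L_classes (k : ℕ) :
    (∀ d₁ d₂ : Setoid (Fin k ⊕ Fin k), IsUniform k d₁ → IsUniform k d₂ →
      (leftIdeal k d₁ = leftIdeal k d₂ ↔ botPart d₁ = botPart d₂)) ∧
    Nonempty (Quotient (Setoid.ker
        (fun d : {d : Setoid (Fin k ⊕ Fin k) // IsUniform k d} => leftIdeal k d.1)) ≃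
      Setoid (Fin k)) ∧
    (∀ d : Setoid (Fin k ⊕ Fin k), IsUniform k d →
      ∃! e : Setoid (Fin k ⊕ Fin k), IsUniform k e ∧ ubpMul e e = e ∧
        leftIdeal k e = leftIdeal k d) := by
  refine ⟨fun _ _ => leftIdeal_eq_leftIdeal_iff, ?_, fun d hd => ?_⟩
  · have hker : Setoid.ker (fun d : {d // IsUniform k d} => leftIdeal k d.1) =
        Setoid.ker (fun d : {d // IsUniform k d} => botPart d.1) :=
      Setoid.ext fun d₁ d₂ => leftIdeal_eq_leftIdeal_iff d₁.2 d₂.2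
    rw [hker]
    exact ⟨Setoid.quotientKerEquivOfSurjective _ fun π =>
      ⟨⟨ePart π, isUniform_ePart π⟩, botPart_ePart π⟩⟩
  · have hunif := isUniform_ePart (botPart d)
    refine ⟨ePart (botPart d), ⟨hunif, hunif.ubpMul_self_eq_self_iff.mpr rfl, ?_⟩, ?_⟩
    · exact (leftIdeal_eq_leftIdeal_iff hunif hd).mpr (botPart_ePart _)
    · rintro e ⟨he, hee, hed⟩
      rw [← he.ubpMul_self_eq_self_iff.mp hee, (leftIdeal_eq_leftIdeal_iff he hd).mp hed]
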